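/- In the Chevalley–Eilenberg complex (Λ*𝔤*, d) of the 7-dimensional nilpotent Lie algebra 𝔤 restricted to ℤ₂-invariant elements (for the involution j fixing e³,e⁴,e⁷ and negating e¹,e²,e⁵,e⁶), the first cohomology is H¹ = ⟨[e³]⟩; in particular the first Betti number of the invariant complex equals 1. -/

import Mathlib

/-- The bracket of the 7-dimensional nilpotent Lie algebra `𝔤` (0-based coordinates),
corresponding to the Chevalley–Eilenberg equations `de⁴ = e¹²`, `de⁵ = e²³`,
`de⁶ = −e¹³`, `de⁷ = −2e¹⁶ + 2e²⁵ + 2e²⁶ − 2e³⁴`, `de¹ = de² = de³ = 0`. -/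
def gBracket (x y : Fin 7 → ℝ) : Fin 7 → ℝ :=
  ![0, 0, 0,
    -(x 0 * y 1 - x 1 * y 0),
    -(x 1 * y 2 - x 2 * y 1),
    x 0 * y 2 - x 2 * y 0,
    2 * (x 0 * y 5 - x 5 * y 0) - 2 * (x 1 * y 4 - x 4 * y 1)
      - 2 * (x 1 * y 5 - x 5 * y 1) + 2 * (x 2 * y 3 - x 3 * y 2)]

/-- The involution `j` fixing `e₃, e₄, e₇` and negating `e₁, e₂, e₅, e₆`. -/
def jInv (x : Fin 7 → ℝ) : Fin 7 → ℝ :=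
  ![-x 0, -x 1, x 2, x 3, -x 4, -x 5, x 6]

noncomputable def δ (i : Fin 7) : Fin 7 → ℝ := fun j => if i = j then 1 else 0

/-- A `ℤ₂`-invariant 1-form `α` on `𝔤` is closed (`dα(x,y) = −α([x,y]) = 0`) if and only
if it is a multiple of `e³`; that is, `H¹` of the invariant Chevalley–Eilenberg complex
is spanned by `[e³]`, so the first Betti number of the invariant complex is `1`. -/
theorem invariant_first_cohomology :
    ∀ α : (Fin 7 → ℝ) →ₗ[ℝ] ℝ,
      ((∀ x, α (jInv x) = α x) ∧ (∀ x y, α (gBracket x y) = 0)) ↔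
      ∃ c : ℝ, ∀ x, α x = c * x 2 := by
  intro α
  constructor
  · rintro ⟨h1, h2⟩
    refine ⟨α (δ 2), fun x => ?_⟩
    have h0 : α (δ 0) = 0 := by
      have := h1 (δ 0)
      have e : jInv (δ 0) = (-1 : ℝ) • δ 0 := by
        funext j; fin_cases j <;> simp [jInv, δ, Matrix.cons_val_succ, Fin.ext_iff, show ((0:Fin 7):ℕ)=0 from rfl, show ((1:Fin 7):ℕ)=1 from rfl, show ((2:Fin 7):ℕ)=2 from rfl, show ((3:Fin 7):ℕ)=3 from rfl, show ((4:Fin 7):ℕ)=4 from rfl, show ((5:Fin 7):ℕ)=5 from rfl, show ((6:Fin 7):ℕ)=6 from rfl] <;> rfl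
      rw [e, map_smul] at this
      simp only [smul_eq_mul, neg_one_mul] at this
      linarith
    have h1' : α (δ 1) = 0 := by
      have := h1 (δ 1)
      have e : jInv (δ 1) = (-1 : ℝ) • δ 1 := by
        funext j; fin_cases j <;> simp [jInv, δ, Matrix.cons_val_succ, Fin.ext_iff, show ((0:Fin 7):ℕ)=0 from rfl, show ((1:Fin 7):ℕ)=1 from rfl, show ((2:Fin 7):ℕ)=2 from rfl, show ((3:Fin 7):ℕ)=3 from rfl, show ((4:Fin 7):ℕ)=4 from rfl, show ((5:Fin 7):ℕ)=5 from rfl, show ((6:Fin 7):ℕ)=6 from rfl] <;> rfl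
      rw [e, map_smul] at this
      simp only [smul_eq_mul, neg_one_mul] at this
      linarith
    have h3 : α (δ 3) = 0 := by
      have := h2 (δ 0) (δ 1)
      have e : gBracket (δ 0) (δ 1) = (-1 : ℝ) • δ 3 := by
        funext j; fin_cases j <;> first | rfl | norm_num [gBracket, δ, Fin.ext_iff, show ((0:Fin 7):ℕ)=0 from rfl, show ((1:Fin 7):ℕ)=1 from rfl, show ((2:Fin 7):ℕ)=2 from rfl, show ((3:Fin 7):ℕ)=3 from rfl, show ((4:Fin 7):ℕ)=4 from rfl, show ((5:Fin 7):ℕ)=5 from rfl, show ((6:Fin 7):ℕ)=6 from rfl]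
      rw [e, map_smul] at this
      simpa using this
    have h4 : α (δ 4) = 0 := by
      have := h2 (δ 1) (δ 2)
      have e : gBracket (δ 1) (δ 2) = (-1 : ℝ) • δ 4 := by
        funext j; fin_cases j <;> first | rfl | norm_num [gBracket, δ, Fin.ext_iff, show ((0:Fin 7):ℕ)=0 from rfl, show ((1:Fin 7):ℕ)=1 from rfl, show ((2:Fin 7):ℕ)=2 from rfl, show ((3:Fin 7):ℕ)=3 from rfl, show ((4:Fin 7):ℕ)=4 from rfl, show ((5:Fin 7):ℕ)=5 from rfl, show ((6:Fin 7):ℕ)=6 from rfl]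
      rw [e, map_smul] at this
      simpa using this
    have h5 : α (δ 5) = 0 := by
      have := h2 (δ 0) (δ 2)
      have e : gBracket (δ 0) (δ 2) = δ 5 := by
        funext j; fin_cases j <;> first | rfl | norm_num [gBracket, δ, Fin.ext_iff, show ((0:Fin 7):ℕ)=0 from rfl, show ((1:Fin 7):ℕ)=1 from rfl, show ((2:Fin 7):ℕ)=2 from rfl, show ((3:Fin 7):ℕ)=3 from rfl, show ((4:Fin 7):ℕ)=4 from rfl, show ((5:Fin 7):ℕ)=5 from rfl, show ((6:Fin 7):ℕ)=6 from rfl]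
      rw [e] at this
      exact this
    have h6 : α (δ 6) = 0 := by
      have := h2 (δ 2) (δ 3)
      have e : gBracket (δ 2) (δ 3) = (2 : ℝ) • δ 6 := by
        funext j; fin_cases j <;> first | rfl | norm_num [gBracket, δ, Fin.ext_iff, show ((0:Fin 7):ℕ)=0 from rfl, show ((1:Fin 7):ℕ)=1 from rfl, show ((2:Fin 7):ℕ)=2 from rfl, show ((3:Fin 7):ℕ)=3 from rfl, show ((4:Fin 7):ℕ)=4 from rfl, show ((5:Fin 7):ℕ)=5 from rfl, show ((6:Fin 7):ℕ)=6 from rfl]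
      rw [e, map_smul] at this
      simpa using this
    have hx := LinearMap.pi_apply_eq_sum_univ α x
    rw [Fin.sum_univ_seven] at hx
    simp only [show (fun j => if (0:Fin 7) = j then (1:ℝ) else 0) = δ 0 from rfl,
      show (fun j => if (1:Fin 7) = j then (1:ℝ) else 0) = δ 1 from rfl,
      show (fun j => if (2:Fin 7) = j then (1:ℝ) else 0) = δ 2 from rfl,
      show (fun j => if (3:Fin 7) = j then (1:ℝ) else 0) = δ 3 from rfl,
      show (fun j => if (4:Fin 7) = j then (1:ℝ) else 0) = δ 4 from rfl,
      show (fun j => if (5:Fin 7) = j then (1:ℝ) else 0) = δ 5 from rfl,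
      show (fun j => if (6:Fin 7) = j then (1:ℝ) else 0) = δ 6 from rfl] at hx
    rw [hx, h0, h1', h3, h4, h5, h6]
    ring_nf
  · rintro ⟨c, hc⟩
    constructor
    · intro x; rw [hc, hc]; simp [jInv]
    · intro x y; rw [hc]; simp [gBracket]
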